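/- Let G and H be groups and τ : G → H a half-isomorphism. Then τ is a semi-isomorphism: for all u, v ∈ G, τ(uvu) = τ(u)τ(v)τ(u). -/

import Mathlib

/-!
Write `a = τ u`, `b = τ v` and `w = τ (u * v * u)`. Expanding `w` as `τ ((u * v) * u)` and as
`τ (u * (v * u))` puts it among `a * b * a`, `a * a * b`, `b * a * a`. If `u` and `v` commute then
so do `a` and `b` (compare the expansions of `τ (u * v * v)` and of
`τ (u * v * (u * v)) = τ (u * (u * v * v))`), and the three candidates agree. Otherwise injectivity
gives `τ (u * v) ≠ τ (v * u)`, so these are `a * b` and `b * a` in some order, and the two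
expansions of `w` leave only `w = a * b * a` or `w = a * a * b = b * a * a`. In the latter case
`τ (u * v * u * v)`, being `w * b` or `b * w`, equals `b * a * a * b`; comparing with
`τ (u * v) ^ 2` gives `w = a * b * a` again.
-/

def IsHalfHom {G H : Type*} [Mul G] [Mul H] (τ : G → H) : Prop :=
  ∀ x y : G, τ (x * y) = τ x * τ y ∨ τ (x * y) = τ y * τ x

namespace IsHalfHom

variable {G H : Type*} [Group G] [Group H] {τ : G → H}

theorem map_mul_self (hτ : IsHalfHom τ) (x : G) : τ (x * x) = τ x * τ x :=
  (hτ x x).elim id id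

theorem map_commute_of_map_mul (hτ : IsHalfHom τ) {u v : G} (huv : Commute u v)
    (hmul : τ (u * v) = τ u * τ v) : Commute (τ u) (τ v) := by
  have hsq : τ (u * v * (u * v)) = τ u * τ v * (τ u * τ v) := by rw [hτ.map_mul_self, hmul]
  have hreassoc : u * v * (u * v) = u * (u * v * v) := by
    simp only [mul_assoc, huv.symm.left_comm]
  rcases hτ (u * v) v with h | h <;> rw [hmul] at h
  · rcases hτ u (u * v * v) with h' | h' <;> rw [← hreassoc, hsq, h] at h'
    all_goals
      try simp only [mul_assoc, mul_right_inj] at h'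
      try simp only [← mul_assoc, mul_left_inj] at h'
    exacts [h'.symm, h']
  · rcases hτ u (v * v) with h' | h' <;> rw [← mul_assoc, h, hτ.map_mul_self] at h'
    all_goals
      try simp only [mul_assoc, mul_right_inj] at h'
      try simp only [← mul_assoc, mul_left_inj] at h'
    exacts [h'.symm, h']

theorem map_commute (hτ : IsHalfHom τ) {u v : G} (huv : Commute u v) : Commute (τ u) (τ v) :=
  (hτ u v).elim (hτ.map_commute_of_map_mul huv) fun h =>
    (hτ.map_commute_of_map_mul huv.symm (huv.eq ▸ h)).symm

theorem map_mul_mul_eq_or (hτ : IsHalfHom τ) (hinj : Function.Injective τ) (u v : G) :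
    τ (u * v * u) = τ u * τ v * τ u ∨
      τ (u * v * u) = τ u * τ u * τ v ∧ τ (u * v * u) = τ v * τ u * τ u := by
  by_cases huv : Commute u v
  · left
    have hab : τ u * τ v = τ v * τ u := hτ.map_commute huv
    have hc : τ (u * v) = τ u * τ v := (hτ u v).elim id (·.trans hab.symm)
    rcases hτ (u * v) u with h | h
    · rw [h, hc]
    · rw [h, hc, mul_assoc, hab]
  · have hne : τ (u * v) ≠ τ (v * u) := fun h => huv (hinj h)
    have hswap : τ (u * v) = τ u * τ v ∧ τ (v * u) = τ v * τ u ∨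
        τ (u * v) = τ v * τ u ∧ τ (v * u) = τ u * τ v := by
      rcases hτ u v with h | h <;> rcases hτ v u with h' | h' <;> simp_all
    have hleft := hτ (u * v) u
    have hright := hτ u (v * u)
    rw [← mul_assoc] at hright
    rcases hswap with ⟨h, h'⟩ | ⟨h, h'⟩ <;> rw [h] at hleft <;> rw [h'] at hright <;>
      simp only [mul_assoc] at hleft hright ⊢ <;> tauto

theorem map_mul_mul_of_eq_of_eq (hτ : IsHalfHom τ) {u v : G}
    (h₁ : τ (u * v * u) = τ u * τ u * τ v) (h₂ : τ (u * v * u) = τ v * τ u * τ u) :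
    τ (u * v * u) = τ u * τ v * τ u := by
  have hw : τ (u * v * u * v) = τ v * τ u * τ u * τ v := by
    rcases hτ (u * v * u) v with h | h
    · rw [h, h₂]
    · rw [h, h₁]; simp only [mul_assoc]
  have hsq : τ (u * v * u * v) = τ (u * v) * τ (u * v) := by
    rw [← hτ.map_mul_self]; simp only [mul_assoc]
  rcases hτ u v with h | h <;> rw [hsq, h] at hw
  · simp only [← mul_assoc, mul_left_inj] at hw
    rw [h₂, hw]
  · simp only [mul_assoc, mul_right_inj] at hw
    rw [h₁, mul_assoc, mul_assoc, hw]

end IsHalfHom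

/-- Every half-isomorphism of groups is a semi-isomorphism:
`τ (u * v * u) = τ u * τ v * τ u`. -/
theorem half_isomorphism_is_semi {G H : Type*} [Group G] [Group H] (τ : G → H)
    (hbij : Function.Bijective τ)
    (hhalf : ∀ x y : G, τ (x * y) = τ x * τ y ∨ τ (x * y) = τ y * τ x) :
    ∀ u v : G, τ (u * v * u) = τ u * τ v * τ u := by
  intro u v
  have hτ : IsHalfHom τ := hhalf
  rcases hτ.map_mul_mul_eq_or hbij.1 u v with h | ⟨h₁, h₂⟩
  · exact h
  · exact hτ.map_mul_mul_of_eq_of_eq h₁ h₂
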